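/- arXiv:2006.16785 — 2 statements merged into one kernel-verified Lean document; each statement's English description precedes it below -/
import Mathlib

section
/- Under the assumptions of the previous setup (f A-Lipschitz, μ B-Lipschitz, r δ-Lipschitz, F(s,a)=(f(s,a),μ(f(s,a))), C = A·max(1,B)), let γ ∈ [0,1) and T a natural number. Then the finite-horizon value function Q_T(s,a) := Σ_{k=0}^{T-1} γ^k · r(F^[k](s,a)) is Lipschitz with constant δ · Σ_{k=0}^{T-1} (γC)^k. -/
/-! For the sup metric on `X × Y`, the map `F = (f, μ ∘ f)` is `A * max 1 B`-Lipschitz, so `F^[k]`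
is `C ^ k`-Lipschitz and the `k`-th term `γ ^ k * r (F^[k] ·)` of `Q_T` is `δ * (γ * C) ^ k`-Lipschitz;
summing over `k < T` gives the constant. -/

open scoped NNReal

theorem dist_iterate_le_pow_mul {α : Type*} [PseudoMetricSpace α] {F : α → α} {C : ℝ}
    (hC : 0 ≤ C) (hF : ∀ p q, dist (F p) (F q) ≤ C * dist p q) (k : ℕ) (p q : α) :
    dist (F^[k] p) (F^[k] q) ≤ C ^ k * dist p q := by
  lift C to ℝ≥0 using hC
  exact_mod_cast ((LipschitzWith.of_dist_le_mul hF).iterate k).dist_le_mul p q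

theorem dist_prodMk_comp_le {α X Y : Type*} [PseudoMetricSpace α] [PseudoMetricSpace X]
    [PseudoMetricSpace Y] {f : α → X} {μ : X → Y} {A B : ℝ} (hA : 0 ≤ A) (hB : 0 ≤ B)
    (hf : ∀ p q, dist (f p) (f q) ≤ A * dist p q) (hμ : ∀ s t, dist (μ s) (μ t) ≤ B * dist s t)
    (p q : α) :
    dist (f p, μ (f p)) (f q, μ (f q)) ≤ A * max 1 B * dist p q := by
  have hd := dist_nonneg (x := p) (y := q)
  rw [Prod.dist_eq]
  refine max_le ((hf p q).trans ?_) ?_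
  · exact mul_le_mul_of_nonneg_right (le_mul_of_one_le_right hA (le_max_left 1 B)) hd
  · calc dist (μ (f p)) (μ (f q)) ≤ B * (A * dist p q) :=
          (hμ _ _).trans (mul_le_mul_of_nonneg_left (hf p q) hB)
      _ ≤ max 1 B * (A * dist p q) :=
          mul_le_mul_of_nonneg_right (le_max_right 1 B) (mul_nonneg hA hd)
      _ = A * max 1 B * dist p q := by ring

theorem dist_discounted_sum_iterate_le {α : Type*} [PseudoMetricSpace α] {F : α → α}
    {r : α → ℝ} {γ C δ : ℝ} (hγ : 0 ≤ γ) (hC : 0 ≤ C) (hδ : 0 ≤ δ)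
    (hF : ∀ p q, dist (F p) (F q) ≤ C * dist p q) (hr : ∀ p q, dist (r p) (r q) ≤ δ * dist p q)
    (T : ℕ) (p q : α) :
    dist (∑ k ∈ Finset.range T, γ ^ k * r (F^[k] p))
        (∑ k ∈ Finset.range T, γ ^ k * r (F^[k] q))
      ≤ (δ * ∑ k ∈ Finset.range T, (γ * C) ^ k) * dist p q := by
  rw [Finset.mul_sum, Finset.sum_mul]
  refine dist_sum_sum_le_of_le _ fun k _ => ?_
  calc dist (γ ^ k * r (F^[k] p)) (γ ^ k * r (F^[k] q))
        = γ ^ k * dist (r (F^[k] p)) (r (F^[k] q)) := by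
          rw [← smul_eq_mul, ← smul_eq_mul, dist_smul₀, Real.norm_of_nonneg (pow_nonneg hγ k)]
    _ ≤ γ ^ k * (δ * (C ^ k * dist p q)) :=
          mul_le_mul_of_nonneg_left
            ((hr _ _).trans (mul_le_mul_of_nonneg_left (dist_iterate_le_pow_mul hC hF k p q) hδ))
            (pow_nonneg hγ k)
    _ = δ * (γ * C) ^ k * dist p q := by ring

theorem stmt2_general {X Y : Type*} [MetricSpace X] [MetricSpace Y]
    (A B δ γ : ℝ) (hA : 0 ≤ A) (hB : 0 ≤ B) (hδ : 0 ≤ δ)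
    (hγ0 : 0 ≤ γ)
    (f : X × Y → X) (μ : X → Y) (r : X × Y → ℝ)
    (hf : ∀ p q : X × Y, dist (f p) (f q) ≤ A * dist p q)
    (hμ : ∀ s t : X, dist (μ s) (μ t) ≤ B * dist s t)
    (hr : ∀ p q : X × Y, dist (r p) (r q) ≤ δ * dist p q)
    (F : X × Y → X × Y) (hF : ∀ p, F p = (f p, μ (f p)))
    (C : ℝ) (hC : C = A * max 1 B) (T : ℕ) :
    ∀ p q : X × Y,
      dist (∑ k ∈ Finset.range T, γ ^ k * r (F^[k] p))
           (∑ k ∈ Finset.range T, γ ^ k * r (F^[k] q))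
        ≤ (δ * ∑ k ∈ Finset.range T, (γ * C) ^ k) * dist p q := by
  have hC0 : 0 ≤ C := hC ▸ mul_nonneg hA (zero_le_one.trans (le_max_left 1 B))
  have hFC : ∀ p q, dist (F p) (F q) ≤ C * dist p q := fun p q => by
    rw [hF, hF, hC]
    exact dist_prodMk_comp_le hA hB hf hμ p q
  exact dist_discounted_sum_iterate_le hγ0 hC0 hδ hFC hr T

theorem stmt2 {X Y : Type*} [MetricSpace X] [MetricSpace Y]
    (A B δ γ : ℝ) (hA : 0 ≤ A) (hB : 0 ≤ B) (hδ : 0 ≤ δ)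
    (hγ0 : 0 ≤ γ) (hγ1 : γ < 1)
    (f : X × Y → X) (μ : X → Y) (r : X × Y → ℝ)
    (hf : ∀ p q : X × Y, dist (f p) (f q) ≤ A * dist p q)
    (hμ : ∀ s t : X, dist (μ s) (μ t) ≤ B * dist s t)
    (hr : ∀ p q : X × Y, dist (r p) (r q) ≤ δ * dist p q)
    (F : X × Y → X × Y) (hF : ∀ p, F p = (f p, μ (f p)))
    (C : ℝ) (hC : C = A * max 1 B) (T : ℕ) :
    ∀ p q : X × Y,
      dist (∑ k ∈ Finset.range T, γ ^ k * r (F^[k] p))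
           (∑ k ∈ Finset.range T, γ ^ k * r (F^[k] q))
        ≤ (δ * ∑ k ∈ Finset.range T, (γ * C) ^ k) * dist p q :=
  stmt2_general A B δ γ hA hB hδ hγ0 f μ r hf hμ hr F hF C hC T
end

section
/- Let f : X × Y → X be A-Lipschitz, μ : X → Y be B-Lipschitz, r : X × Y → ℝ be δ-Lipschitz, F(s,a) = (f(s,a), μ(f(s,a))), C = A·max(1,B), γ ∈ [0,1), and let (κ_k)_{k∈ℕ} be a sequence of reals with 0 < κ_k ≤ κ ≤ 1 for all k. If γC ≠ 1, then the preconditioned finite-horizon value Q̃_T(s,a) := Σ_{k=0}^{T-1} γ^k κ_k r(F^[k](s,a)) is Lipschitz with constant κ · δ · (1 - (γC)^T)/(1 - γC). -/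
/-!
The map `F p = (f p, μ (f p))` is `A * max 1 B`-Lipschitz for the sup metric on `X × Y`, so its
`k`-th iterate is `C ^ k`-Lipschitz and the `k`-th summand of `Q̃_T` is
`γ ^ k κ_k δ C ^ k ≤ κ δ (γ C) ^ k`-Lipschitz. Summing the geometric series gives the bound.
-/

open Finset NNReal

theorem LipschitzWith.prodMk_comp_self {α β γ : Type*} [PseudoEMetricSpace α]
    [PseudoEMetricSpace β] [PseudoEMetricSpace γ] {f : α → β} {g : β → γ} {A B : ℝ≥0}
    (hf : LipschitzWith A f) (hg : LipschitzWith B g) :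
    LipschitzWith (A * max 1 B) fun p => (f p, g (f p)) :=
  (hf.prodMk (hg.comp hf)).weaken <| by
    rw [mul_max, mul_one, mul_comm A B]

theorem dist_sum_mul_iterate_le {α : Type*} [PseudoMetricSpace α] {F : α → α} {r : α → ℝ}
    {C δ : ℝ≥0} (hF : LipschitzWith C F) (hr : LipschitzWith δ r) (w : ℕ → ℝ)
    (s : Finset ℕ) (p q : α) :
    dist (∑ k ∈ s, w k * r (F^[k] p)) (∑ k ∈ s, w k * r (F^[k] q)) ≤
      (∑ k ∈ s, |w k| * δ * C ^ k) * dist p q := by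
  calc dist (∑ k ∈ s, w k * r (F^[k] p)) (∑ k ∈ s, w k * r (F^[k] q))
      ≤ ∑ k ∈ s, dist (w k * r (F^[k] p)) (w k * r (F^[k] q)) := dist_sum_sum_le _ _ _
    _ ≤ ∑ k ∈ s, |w k| * ((δ * C ^ k : ℝ≥0) * dist p q) := by
        gcongr with k
        rw [← smul_eq_mul, ← smul_eq_mul, dist_smul₀, Real.norm_eq_abs]
        gcongr
        exact (hr.comp (hF.iterate k)).dist_le_mul _ _
    _ = (∑ k ∈ s, |w k| * δ * C ^ k) * dist p q := by
        rw [sum_mul]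
        push_cast
        exact sum_congr rfl fun k _ => by ring

theorem sum_abs_pow_mul_mul_pow_le {γ C δ κ : ℝ} {c : ℕ → ℝ} (hγ : 0 ≤ γ) (hC : 0 ≤ C)
    (hδ : 0 ≤ δ) (hc₀ : ∀ k, 0 ≤ c k) (hc : ∀ k, c k ≤ κ) (hne : γ * C ≠ 1) (T : ℕ) :
    ∑ k ∈ range T, |γ ^ k * c k| * δ * C ^ k ≤ κ * δ * (1 - (γ * C) ^ T) / (1 - γ * C) :=
  calc ∑ k ∈ range T, |γ ^ k * c k| * δ * C ^ k
      ≤ ∑ k ∈ range T, κ * δ * (γ * C) ^ k := sum_le_sum fun k _ => by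
        calc |γ ^ k * c k| * δ * C ^ k = γ ^ k * c k * δ * C ^ k := by
              rw [abs_of_nonneg (mul_nonneg (pow_nonneg hγ k) (hc₀ k))]
          _ ≤ γ ^ k * κ * δ * C ^ k := by gcongr; exact hc k
          _ = κ * δ * (γ * C) ^ k := by ring
    _ = κ * δ * (1 - (γ * C) ^ T) / (1 - γ * C) := by
        rw [← mul_sum, geom_sum_eq hne, mul_div_assoc, ← neg_div_neg_eq, neg_sub, neg_sub]

theorem stmt6_general {X Y : Type*} [MetricSpace X] [MetricSpace Y]
    (A B δ γ : ℝ) (hA : 0 ≤ A) (hB : 0 ≤ B) (hδ : 0 ≤ δ)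
    (hγ0 : 0 ≤ γ)
    (f : X × Y → X) (μ : X → Y) (r : X × Y → ℝ)
    (hf : ∀ p q : X × Y, dist (f p) (f q) ≤ A * dist p q)
    (hμ : ∀ s t : X, dist (μ s) (μ t) ≤ B * dist s t)
    (hr : ∀ p q : X × Y, dist (r p) (r q) ≤ δ * dist p q)
    (F : X × Y → X × Y) (hF : ∀ p, F p = (f p, μ (f p)))
    (C : ℝ) (hC : C = A * max 1 B) (hne : γ * C ≠ 1)
    (κseq : ℕ → ℝ) (κ : ℝ)
    (hκ : ∀ k, 0 < κseq k ∧ κseq k ≤ κ) (T : ℕ) :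
    ∀ p q : X × Y,
      dist (∑ k ∈ Finset.range T, γ ^ k * κseq k * r (F^[k] p))
           (∑ k ∈ Finset.range T, γ ^ k * κseq k * r (F^[k] q))
        ≤ (κ * δ * (1 - (γ * C) ^ T) / (1 - γ * C)) * dist p q := by
  intro p q
  lift A to ℝ≥0 using hA
  lift B to ℝ≥0 using hB
  lift δ to ℝ≥0 using hδ
  have hFL : LipschitzWith (A * max 1 B) F := by
    rw [funext hF]
    exact (LipschitzWith.of_dist_le_mul hf).prodMk_comp_self (.of_dist_le_mul hμ)
  refine (dist_sum_mul_iterate_le hFL (.of_dist_le_mul hr) _ _ p q).trans ?_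
  rw [NNReal.coe_mul, NNReal.coe_max, NNReal.coe_one, ← hC]
  gcongr ?_ * _
  exact sum_abs_pow_mul_mul_pow_le hγ0 (hC ▸ by positivity) δ.2 (fun k => (hκ k).1.le)
    (fun k => (hκ k).2) hne T

theorem stmt6 {X Y : Type*} [MetricSpace X] [MetricSpace Y]
    (A B δ γ : ℝ) (hA : 0 ≤ A) (hB : 0 ≤ B) (hδ : 0 ≤ δ)
    (hγ0 : 0 ≤ γ) (hγ1 : γ < 1)
    (f : X × Y → X) (μ : X → Y) (r : X × Y → ℝ)
    (hf : ∀ p q : X × Y, dist (f p) (f q) ≤ A * dist p q)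
    (hμ : ∀ s t : X, dist (μ s) (μ t) ≤ B * dist s t)
    (hr : ∀ p q : X × Y, dist (r p) (r q) ≤ δ * dist p q)
    (F : X × Y → X × Y) (hF : ∀ p, F p = (f p, μ (f p)))
    (C : ℝ) (hC : C = A * max 1 B) (hne : γ * C ≠ 1)
    (κseq : ℕ → ℝ) (κ : ℝ)
    (hκ : ∀ k, 0 < κseq k ∧ κseq k ≤ κ) (hκ1 : κ ≤ 1) (T : ℕ) :
    ∀ p q : X × Y,
      dist (∑ k ∈ Finset.range T, γ ^ k * κseq k * r (F^[k] p))
           (∑ k ∈ Finset.range T, γ ^ k * κseq k * r (F^[k] q))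
        ≤ (κ * δ * (1 - (γ * C) ^ T) / (1 - γ * C)) * dist p q :=
  stmt6_general A B δ γ hA hB hδ hγ0 f μ r hf hμ hr F hF C hC hne κseq κ hκ T
end
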